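/- Let I, X_1, ..., X_n be discrete random variables with H(I | X_1,...,X_n) = 0, and suppose that for every subset J of size k, I is independent of (X_i : i ∈ J) (i.e., I(I; (X_i : i ∈ J)) = 0). Then ∑_{i=1}^n H(X_i) ≥ (n/(n-k)) · H(I). -/

import Mathlib

open Finset Real
open scoped Classical

/-- `P(X = a)` for a random variable `X` on the finite weighted space `(Ω, μ)`. -/
noncomputable def probOf {Ω α : Type*} [Fintype Ω] (μ : Ω → ℝ) (X : Ω → α) (a : α) : ℝ :=
  ∑ ω, if X ω = a then μ ω else 0

/-- Shannon entropy (in bits). -/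
noncomputable def entropy {Ω α : Type*} [Fintype Ω] [Fintype α] (μ : Ω → ℝ) (X : Ω → α) : ℝ :=
  -∑ a, probOf μ X a * Real.logb 2 (probOf μ X a)

/-- Mutual information `I(X;Y) = H(X) + H(Y) - H(X,Y)` (in bits). -/
noncomputable def mutualInfo {Ω α β : Type*} [Fintype Ω] [Fintype α] [Fintype β]
    (μ : Ω → ℝ) (X : Ω → α) (Y : Ω → β) : ℝ :=
  entropy μ X + entropy μ Y - entropy μ (fun ω => (X ω, Y ω))

/-- Conditional entropy `H(X | Y) = H(X,Y) - H(Y)` (in bits). -/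
noncomputable def condEntropyOf {Ω α β : Type*} [Fintype Ω] [Fintype α] [Fintype β]
    (μ : Ω → ℝ) (X : Ω → α) (Y : Ω → β) : ℝ :=
  entropy μ (fun ω => (X ω, Y ω)) - entropy μ Y

/-!
Since all shares determine the secret, for every set `J` of `k` shares
`H(I) + H(X_J) = H(I, X_J) ≤ H(I, X) = H(X) ≤ H(X_J) + ∑_{i ∉ J} H(X_i)`,
so `H(I) ≤ ∑_{i ∉ J} H(X_i)`. Taking for `J` the complements of the `n` cyclic shifts `s + T`
of one fixed `(n - k)`-set `T ⊆ ℤ/n` and summing counts every share exactly `n - k` times: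
`n H(I) ≤ (n - k) ∑ H(X_i)`.
-/

theorem Finset.sum_sum_add_eq_card_nsmul_sum {G M : Type*} [AddGroup G] [Fintype G]
    [AddCommMonoid M] (T : Finset G) (f : G → M) :
    ∑ s, ∑ t ∈ T, f (s + t) = #T • ∑ g, f g := by
  rw [sum_comm, ← sum_const]
  exact sum_congr rfl fun t _ => Equiv.sum_comp (Equiv.addRight t) f

section Entropy

variable {Ω α β : Type*} [Fintype Ω] {μ : Ω → ℝ}

lemma probOf_nonneg (hμ0 : ∀ ω, 0 ≤ μ ω) (X : Ω → α) (a : α) : 0 ≤ probOf μ X a :=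
  sum_nonneg fun ω _ => by split_ifs <;> simp [hμ0 ω]

lemma le_probOf_apply (hμ0 : ∀ ω, 0 ≤ μ ω) (X : Ω → α) (ω : Ω) : μ ω ≤ probOf μ X (X ω) :=
  calc μ ω = if X ω = X ω then μ ω else 0 := (if_pos rfl).symm
    _ ≤ probOf μ X (X ω) :=
      single_le_sum (f := fun ω' => if X ω' = X ω then μ ω' else 0)
        (fun ω' _ => by split_ifs <;> simp [hμ0 ω']) (mem_univ ω)

lemma probOf_le_probOf_comp (hμ0 : ∀ ω, 0 ≤ μ ω) (X : Ω → α) (f : α → β) (a : α) :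
    probOf μ X a ≤ probOf μ (f ∘ X) (f a) :=
  sum_le_sum fun ω _ => by
    by_cases h : X ω = a
    · simp [h]
    · split_ifs <;> simp [hμ0 ω]

variable (μ) in
lemma sum_probOf_mul [Fintype α] (X : Ω → α) (g : α → ℝ) :
    ∑ a, probOf μ X a * g a = ∑ ω, μ ω * g (X ω) := by
  simp only [probOf, sum_mul, ite_mul, zero_mul]
  rw [sum_comm]
  simp

lemma sum_probOf (hμ1 : ∑ ω, μ ω = 1) [Fintype α] (X : Ω → α) : ∑ a, probOf μ X a = 1 := by
  simpa [hμ1] using sum_probOf_mul μ X (fun _ => 1)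

variable (μ) in
lemma entropy_eq_neg_sum [Fintype α] (X : Ω → α) :
    entropy μ X = -∑ ω, μ ω * logb 2 (probOf μ X (X ω)) :=
  congrArg Neg.neg (sum_probOf_mul μ X _)

lemma entropy_eq_zero_of_subsingleton (hμ1 : ∑ ω, μ ω = 1) [Fintype α] [Subsingleton α]
    (X : Ω → α) : entropy μ X = 0 := by
  have hX : ∀ ω, probOf μ X (X ω) = 1 := fun ω => by
    simpa [probOf, Subsingleton.elim (X _) (X ω)] using hμ1
  simp [entropy_eq_neg_sum, hX]

theorem entropy_le_of_eq_comp (hμ0 : ∀ ω, 0 ≤ μ ω) [Fintype α] [Fintype β]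
    {X : Ω → α} {Y : Ω → β} (f : α → β) (hY : ∀ ω, Y ω = f (X ω)) :
    entropy μ Y ≤ entropy μ X := by
  obtain rfl : Y = f ∘ X := funext hY
  rw [entropy_eq_neg_sum, entropy_eq_neg_sum, neg_le_neg_iff]
  refine sum_le_sum fun ω _ => ?_
  rcases (hμ0 ω).eq_or_lt with h | h
  · simp [← h]
  · exact mul_le_mul_of_nonneg_left (logb_le_logb_of_le one_lt_two
      (h.trans_le (le_probOf_apply hμ0 X ω)) (probOf_le_probOf_comp hμ0 X f (X ω))) h.le

lemma mul_logb_sub_mul_logb_le {p q : ℝ} (hp : 0 ≤ p) (hq : 0 ≤ q) (hpq : 0 < p → 0 < q) :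
    p * logb 2 q - p * logb 2 p ≤ (q - p) / log 2 := by
  rcases hp.eq_or_lt with rfl | hp
  · simpa using div_nonneg hq (log_nonneg one_le_two)
  have hq := hpq hp
  calc p * logb 2 q - p * logb 2 p = p * (log (q / p) / log 2) := by
        rw [log_div hq.ne' hp.ne', logb, logb]; ring
    _ ≤ p * ((q / p - 1) / log 2) := by
        gcongr
        exact log_le_sub_one_of_pos (div_pos hq hp)
    _ = (q - p) / log 2 := by field_simp

/-- Gibbs' inequality: entropy is at most cross entropy. -/
theorem entropy_le_neg_sum_mul_logb (hμ0 : ∀ ω, 0 ≤ μ ω) (hμ1 : ∑ ω, μ ω = 1) [Fintype α]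
    (X : Ω → α) (q : α → ℝ) (hq0 : ∀ a, 0 ≤ q a) (hq1 : ∑ a, q a ≤ 1)
    (hq : ∀ a, 0 < probOf μ X a → 0 < q a) :
    entropy μ X ≤ -∑ ω, μ ω * logb 2 (q (X ω)) := by
  have hterm := sum_le_sum fun a (_ : a ∈ univ) =>
    mul_logb_sub_mul_logb_le (probOf_nonneg hμ0 X a) (hq0 a) (hq a)
  rw [sum_sub_distrib, ← sum_div, sum_sub_distrib, sum_probOf hμ1,
    sum_probOf_mul μ X (fun a => logb 2 (q a))] at hterm
  have hdiv : (∑ a, q a - 1) / log 2 ≤ 0 :=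
    div_nonpos_of_nonpos_of_nonneg (by linarith) (log_nonneg one_le_two)
  rw [entropy]
  linarith

theorem entropy_pair_le_add (hμ0 : ∀ ω, 0 ≤ μ ω) (hμ1 : ∑ ω, μ ω = 1) [Fintype α] [Fintype β]
    (X : Ω → α) (Y : Ω → β) :
    entropy μ (fun ω => (X ω, Y ω)) ≤ entropy μ X + entropy μ Y := by
  have hsupp (c : α × β) (hc : 0 < probOf μ (fun ω => (X ω, Y ω)) c) :
      0 < probOf μ X c.1 * probOf μ Y c.2 :=
    mul_pos (hc.trans_le (probOf_le_probOf_comp hμ0 _ Prod.fst c))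
      (hc.trans_le (probOf_le_probOf_comp hμ0 _ Prod.snd c))
  have hmass : ∑ c : α × β, probOf μ X c.1 * probOf μ Y c.2 = 1 := by
    rw [Fintype.sum_prod_type, ← sum_mul_sum, sum_probOf hμ1, sum_probOf hμ1, mul_one]
  refine (entropy_le_neg_sum_mul_logb hμ0 hμ1 _ _
    (fun c => mul_nonneg (probOf_nonneg hμ0 X _) (probOf_nonneg hμ0 Y _)) hmass.le hsupp).trans_eq ?_
  rw [entropy_eq_neg_sum μ X, entropy_eq_neg_sum μ Y, ← neg_add, ← sum_add_distrib]
  refine congrArg Neg.neg (sum_congr rfl fun ω _ => ?_)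
  rcases (hμ0 ω).eq_or_lt with h | h
  · simp [← h]
  · rw [← mul_add, logb_mul (h.trans_le (le_probOf_apply hμ0 X ω)).ne'
      (h.trans_le (le_probOf_apply hμ0 Y ω)).ne']

theorem entropy_restrict_le_sum (hμ0 : ∀ ω, 0 ≤ μ ω) (hμ1 : ∑ ω, μ ω = 1) [Fintype α]
    {ι : Type*} [DecidableEq ι] (Y : ι → Ω → α) (T : Finset ι) :
    entropy μ (fun ω (i : T) => Y i ω) ≤ ∑ i ∈ T, entropy μ (Y i) := by
  induction T using Finset.induction_on with
  | empty => simp [entropy_eq_zero_of_subsingleton hμ1]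
  | insert a T ha ih =>
    calc entropy μ (fun ω (i : (insert a T : Finset ι)) => Y i ω)
        ≤ entropy μ (fun ω => (Y a ω, fun i : T => Y i ω)) :=
          entropy_le_of_eq_comp hμ0 (fun p i => if h : (i : ι) = a then p.1
              else p.2 ⟨i, mem_of_mem_insert_of_ne i.2 h⟩)
            fun ω => funext fun i => by split_ifs with h <;> simp [h]
      _ ≤ entropy μ (Y a) + entropy μ (fun ω (i : T) => Y i ω) := entropy_pair_le_add hμ0 hμ1 _ _
      _ ≤ ∑ i ∈ insert a T, entropy μ (Y i) := by rw [sum_insert ha]; linarith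

theorem entropy_le_sum_entropy_compl (hμ0 : ∀ ω, 0 ≤ μ ω) (hμ1 : ∑ ω, μ ω = 1)
    {S ι : Type*} [Fintype S] [Fintype ι] [DecidableEq ι] [Fintype α] (I : Ω → S) (X : ι → Ω → α)
    (hdet : condEntropyOf μ I (fun ω i => X i ω) = 0) (J : Finset ι)
    (hJ : mutualInfo μ I (fun ω (i : J) => X i ω) = 0) :
    entropy μ I ≤ ∑ i ∈ Jᶜ, entropy μ (X i) := by
  have hsecret_shares : entropy μ (fun ω => (I ω, fun i : J => X i ω))
      ≤ entropy μ (fun ω => (I ω, fun i => X i ω)) :=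
    entropy_le_of_eq_comp hμ0 (fun p => (p.1, fun i : J => p.2 i)) fun _ => rfl
  have hsplit : entropy μ (fun ω i => X i ω)
      ≤ entropy μ (fun ω => (fun i : J => X i ω, fun i : (Jᶜ : Finset ι) => X i ω)) :=
    entropy_le_of_eq_comp hμ0
      (fun p i => if h : i ∈ J then p.1 ⟨i, h⟩ else p.2 ⟨i, mem_compl.2 h⟩)
      fun ω => funext fun i => by split_ifs <;> rfl
  have hJJc := entropy_pair_le_add hμ0 hμ1 (fun ω (i : J) => X i ω)
    (fun ω (i : (Jᶜ : Finset ι)) => X i ω)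
  have hJc := entropy_restrict_le_sum hμ0 hμ1 X Jᶜ
  rw [mutualInfo] at hJ
  rw [condEntropyOf] at hdet
  linarith

end Entropy

/-- Ramp-scheme entropy bound: if all `n` shares determine the secret `I` and any
`k` shares reveal nothing about it, then `∑ H(X_i) ≥ (n/(n-k)) H(I)`. -/
theorem ramp_scheme_entropy_bound {Ω S α : Type*} [Fintype Ω] [Fintype S] [Fintype α]
    (μ : Ω → ℝ) (hμ0 : ∀ ω, 0 ≤ μ ω) (hμ1 : ∑ ω, μ ω = 1)
    (n k : ℕ) (hk : k < n)
    (I : Ω → S) (X : Fin n → Ω → α)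
    (hdet : condEntropyOf μ I (fun ω (i : Fin n) => X i ω) = 0)
    (hsec : ∀ J ∈ (Finset.univ : Finset (Fin n)).powersetCard k,
      mutualInfo μ I (fun ω (i : {x // x ∈ J}) => X i.1 ω) = 0) :
    ∑ i : Fin n, entropy μ (X i) ≥ ((n : ℝ) / ((n : ℝ) - k)) * entropy μ I := by
  have : NeZero n := ⟨by omega⟩
  obtain ⟨T, -, hT⟩ := exists_subset_card_eq (s := (univ : Finset (Fin n))) (n := n - k) (by simp)
  have hshift (s : Fin n) : entropy μ I ≤ ∑ t ∈ T, entropy μ (X (s + t)) := by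
    have hJ : (T.map (addLeftEmbedding s))ᶜ ∈ (univ : Finset (Fin n)).powersetCard k := by
      rw [mem_powersetCard_univ, card_compl, card_map, hT, Fintype.card_fin]
      omega
    have h := entropy_le_sum_entropy_compl hμ0 hμ1 I X hdet _ (hsec _ hJ)
    rwa [compl_compl, sum_map] at h
  have hcount : (n : ℝ) * entropy μ I ≤ ((n - k : ℕ) : ℝ) * ∑ i, entropy μ (X i) :=
    calc (n : ℝ) * entropy μ I = ∑ _s : Fin n, entropy μ I := by simp
      _ ≤ ∑ s, ∑ t ∈ T, entropy μ (X (s + t)) := sum_le_sum fun s _ => hshift s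
      _ = _ := by rw [sum_sum_add_eq_card_nsmul_sum T fun i => entropy μ (X i), hT, nsmul_eq_mul]
  have hnk : (0 : ℝ) < n - k := sub_pos.2 (by exact_mod_cast hk)
  rw [Nat.cast_sub hk.le] at hcount
  rw [ge_iff_le, div_mul_eq_mul_div, div_le_iff₀ hnk]
  linarith
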